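/- Let ω be a C^∞ solution of −Δω = ω in Ω with ∂ω/∂n = 0 and ω = 1 on ∂Ω, and let Rω = −y ω_x + x ω_y. Then along ∂Ω: R²ω = −(½ d(r²)/ds)², and ∂(R²ω)/∂n = ½ d²(r²)/ds² · (−y dx/ds + x dy/ds) − κ(s)·(½ d(r²)/ds)², where r²(s) = x(s)² + y(s)². -/

import Mathlib

noncomputable section
open Real MeasureTheory ComplexConjugate

/-- Partial derivative in the `x` direction. -/
def pdx (u : ℝ × ℝ → ℝ) (p : ℝ × ℝ) : ℝ := fderiv ℝ u p (1, 0)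

/-- Partial derivative in the `y` direction. -/
def pdy (u : ℝ × ℝ → ℝ) (p : ℝ × ℝ) : ℝ := fderiv ℝ u p (0, 1)

/-- The Laplacian on `ℝ²`. -/
def lap (u : ℝ × ℝ → ℝ) (p : ℝ × ℝ) : ℝ := pdx (pdx u) p + pdy (pdy u) p

/-- Partial derivative in the `x` direction, for complex-valued functions. -/
def pdxC (u : ℝ × ℝ → ℂ) (p : ℝ × ℝ) : ℂ := fderiv ℝ u p (1, 0)

/-- Partial derivative in the `y` direction, for complex-valued functions. -/
def pdyC (u : ℝ × ℝ → ℂ) (p : ℝ × ℝ) : ℂ := fderiv ℝ u p (0, 1)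

/-- Normal derivative with respect to the outward unit normal
`n = (sin θ, -cos θ)`, where `θ` is the tangent angle at the boundary point. -/
def nderiv (th : ℝ) (u : ℝ × ℝ → ℝ) (p : ℝ × ℝ) : ℝ :=
  Real.sin th * pdx u p - Real.cos th * pdy u p

/-- Normal derivative for complex-valued functions. -/
def nderivC (th : ℝ) (u : ℝ × ℝ → ℂ) (p : ℝ × ℝ) : ℂ :=
  (Real.sin th : ℂ) * pdxC u p - (Real.cos th : ℂ) * pdyC u p

/-- The rotation generator `R = -y ∂/∂x + x ∂/∂y`. -/
def Rop (u : ℝ × ℝ → ℝ) (p : ℝ × ℝ) : ℝ := -p.2 * pdx u p + p.1 * pdy u p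

/-- The scaling generator `S = x ∂/∂x + y ∂/∂y`. -/
def Sop (u : ℝ × ℝ → ℝ) (p : ℝ × ℝ) : ℝ := p.1 * pdx u p + p.2 * pdy u p

/-- `Ω` is a (Euclidean) disk. -/
def IsDisk (Om : Set (ℝ × ℝ)) : Prop :=
  ∃ z : ℝ × ℝ, ∃ r : ℝ, 0 < r ∧
    Om = {p : ℝ × ℝ | (p.1 - z.1) ^ 2 + (p.2 - z.2) ^ 2 < r ^ 2}

/-- `u` is `C^∞` on the closure of `Ω` (i.e. on an open neighborhood of it). -/
def SmoothNearClosure (Om : Set (ℝ × ℝ)) (u : ℝ × ℝ → ℝ) : Prop :=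
  ∃ U : Set (ℝ × ℝ), IsOpen U ∧ closure Om ⊆ U ∧ ContDiffOn ℝ (⊤ : ℕ∞) u U

/-- Complexified gradient `∇u = u_x + i u_y`. -/
def gradC (u : ℝ × ℝ → ℝ) (p : ℝ × ℝ) : ℂ :=
  (pdx u p : ℂ) + Complex.I * (pdy u p : ℂ)

/-- Complexified conjugate gradient `∇̄u = u_x - i u_y`. -/
def gradbarC (u : ℝ × ℝ → ℝ) (p : ℝ × ℝ) : ℂ :=
  (pdx u p : ℂ) - Complex.I * (pdy u p : ℂ)

/-- The bilinear form `B(φ, ψ; λ) = ∫∫_Ω (φ_x ψ̄_x + φ_y ψ̄_y - λ φ ψ̄)`. -/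
def Bform (Om : Set (ℝ × ℝ)) (lam : ℝ) (phi psi : ℝ × ℝ → ℂ) : ℂ :=
  ∫ p in Om, (pdxC phi p * conj (pdxC psi p) + pdyC phi p * conj (pdyC psi p)
    - (lam : ℂ) * phi p * conj (psi p))


section Helpers
variable {U : Set (ℝ × ℝ)} {f g h m : ℝ × ℝ → ℝ}

lemma diffAt_of_cdOn {F : Type*} [NormedAddCommGroup F] [NormedSpace ℝ F] {g : ℝ × ℝ → F}
    (hU : IsOpen U) (hf : ContDiffOn ℝ (⊤ : ℕ∞) g U) {p} (hp : p ∈ U) :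
    DifferentiableAt ℝ g p :=
  ((hf p hp).contDiffAt (hU.mem_nhds hp)).differentiableAt (by simp)

lemma contDiffOn_pdx (hU : IsOpen U) (hf : ContDiffOn ℝ (⊤ : ℕ∞) f U) :
    ContDiffOn ℝ (⊤ : ℕ∞) (pdx f) U :=
  (hf.fderiv_of_isOpen hU (by simp)).clm_apply contDiffOn_const

lemma contDiffOn_pdy (hU : IsOpen U) (hf : ContDiffOn ℝ (⊤ : ℕ∞) f U) :
    ContDiffOn ℝ (⊤ : ℕ∞) (pdy f) U :=
  (hf.fderiv_of_isOpen hU (by simp)).clm_apply contDiffOn_const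

lemma fderiv_eval_swap (hU : IsOpen U) (hf : ContDiffOn ℝ (⊤ : ℕ∞) f U) {p} (hp : p ∈ U) (v w : ℝ × ℝ) :
    fderiv ℝ (fun q => fderiv ℝ f q v) p w = fderiv ℝ (fderiv ℝ f) p w v := by
  have hd : DifferentiableAt ℝ (fderiv ℝ f) p :=
    diffAt_of_cdOn hU (hf.fderiv_of_isOpen hU (by simp)) hp
  have := fderiv_clm_apply (𝕜 := ℝ) hd (differentiableAt_const v)
  rw [show (fun q => fderiv ℝ f q v) = fun y => (fderiv ℝ f y) ((fun _ => v) y) from rfl, this]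
  simp

lemma pdx_pdy_symm (hU : IsOpen U) (hf : ContDiffOn ℝ (⊤ : ℕ∞) f U) {p} (hp : p ∈ U) :
    pdx (pdy f) p = pdy (pdx f) p := by
  have hat : ContDiffAt ℝ (⊤ : ℕ∞) f p := (hf p hp).contDiffAt (hU.mem_nhds hp)
  have hsymm := hat.isSymmSndFDerivAt (by rw [minSmoothness_of_isRCLikeNormedField]; exact WithTop.coe_le_coe.2 le_top)
  have h1 := fderiv_eval_swap hU hf hp (0,1) (1,0)
  have h2 := fderiv_eval_swap hU hf hp (1,0) (0,1)
  unfold pdx pdy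
  rw [h1, h2, hsymm]

lemma hasDerivAt_comp_curve {γ : ℝ → ℝ × ℝ} {s : ℝ} {v : ℝ × ℝ}
    (hγ : HasDerivAt γ v s) (hf : DifferentiableAt ℝ f (γ s)) :
    HasDerivAt (fun t => f (γ t)) (v.1 * pdx f (γ s) + v.2 * pdy f (γ s)) s := by
  have H := hf.hasFDerivAt.comp_hasDerivAt s hγ
  have : fderiv ℝ f (γ s) v = v.1 * pdx f (γ s) + v.2 * pdy f (γ s) := by
    have hv : v = v.1 • ((1:ℝ),(0:ℝ)) + v.2 • ((0:ℝ),(1:ℝ)) := by simp [Prod.ext_iff]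
    conv_lhs => rw [hv]
    rw [map_add, (fderiv ℝ f (γ s)).map_smul, (fderiv ℝ f (γ s)).map_smul]
    simp [pdx, pdy, smul_eq_mul]
  rwa [this] at H

lemma pdx_add {p : ℝ × ℝ} (hg : DifferentiableAt ℝ g p) (hh : DifferentiableAt ℝ h p) :
    pdx (fun q => g q + h q) p = pdx g p + pdx h p := by
  simp [pdx, fderiv_fun_add hg hh]

lemma pdy_add {p : ℝ × ℝ} (hg : DifferentiableAt ℝ g p) (hh : DifferentiableAt ℝ h p) :
    pdy (fun q => g q + h q) p = pdy g p + pdy h p := by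
  simp [pdy, fderiv_fun_add hg hh]

lemma pdx_neg {p : ℝ × ℝ} : pdx (fun q => -g q) p = -pdx g p := by
  simp [pdx, fderiv_neg]

lemma pdy_neg {p : ℝ × ℝ} : pdy (fun q => -g q) p = -pdy g p := by
  simp [pdy, fderiv_neg]

lemma pdx_RopForm {p : ℝ × ℝ} (hg : DifferentiableAt ℝ g p) (hh : DifferentiableAt ℝ h p) :
    pdx (fun q => -q.2 * g q + q.1 * h q) p
      = -p.2 * pdx g p + h p + p.1 * pdx h p := by
  have H : HasFDerivAt (fun q : ℝ × ℝ => -q.2 * g q + q.1 * h q)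
      ((-(Prod.snd p) • fderiv ℝ g p + g p • (-(ContinuousLinearMap.snd ℝ ℝ ℝ))) +
       ((Prod.fst p) • fderiv ℝ h p + h p • (ContinuousLinearMap.fst ℝ ℝ ℝ))) p :=
    ((hasFDerivAt_snd.neg.mul hg.hasFDerivAt).add (hasFDerivAt_fst.mul hh.hasFDerivAt))
  simp only [pdx, H.fderiv]
  simp [smul_eq_mul]; ring

lemma pdy_RopForm {p : ℝ × ℝ} (hg : DifferentiableAt ℝ g p) (hh : DifferentiableAt ℝ h p) :
    pdy (fun q => -q.2 * g q + q.1 * h q) p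
      = -g p + -p.2 * pdy g p + p.1 * pdy h p := by
  have H : HasFDerivAt (fun q : ℝ × ℝ => -q.2 * g q + q.1 * h q)
      ((-(Prod.snd p) • fderiv ℝ g p + g p • (-(ContinuousLinearMap.snd ℝ ℝ ℝ))) +
       ((Prod.fst p) • fderiv ℝ h p + h p • (ContinuousLinearMap.fst ℝ ℝ ℝ))) p :=
    ((hasFDerivAt_snd.neg.mul hg.hasFDerivAt).add (hasFDerivAt_fst.mul hh.hasFDerivAt))
  simp only [pdy, H.fderiv]
  simp [smul_eq_mul]; ring

lemma pdx_form3 {p : ℝ × ℝ} (hg : DifferentiableAt ℝ g p) (hh : DifferentiableAt ℝ h p)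
    (hm : DifferentiableAt ℝ m p) :
    pdx (fun q => -q.2 * g q + h q + q.1 * m q) p
      = -p.2 * pdx g p + pdx h p + m p + p.1 * pdx m p := by
  have H : HasFDerivAt (fun q : ℝ × ℝ => -q.2 * g q + h q + q.1 * m q)
      (((-(Prod.snd p) • fderiv ℝ g p + g p • (-(ContinuousLinearMap.snd ℝ ℝ ℝ))) +
       fderiv ℝ h p) + ((Prod.fst p) • fderiv ℝ m p + m p • (ContinuousLinearMap.fst ℝ ℝ ℝ))) p :=
    (((hasFDerivAt_snd.neg.mul hg.hasFDerivAt).add hh.hasFDerivAt).add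
      (hasFDerivAt_fst.mul hm.hasFDerivAt))
  simp only [pdx, H.fderiv]
  simp [smul_eq_mul]; ring

lemma pdy_form3 {p : ℝ × ℝ} (hg : DifferentiableAt ℝ g p) (hh : DifferentiableAt ℝ h p)
    (hm : DifferentiableAt ℝ m p) :
    pdy (fun q => -q.2 * g q + h q + q.1 * m q) p
      = -g p + -p.2 * pdy g p + pdy h p + p.1 * pdy m p := by
  have H : HasFDerivAt (fun q : ℝ × ℝ => -q.2 * g q + h q + q.1 * m q)
      (((-(Prod.snd p) • fderiv ℝ g p + g p • (-(ContinuousLinearMap.snd ℝ ℝ ℝ))) +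
       fderiv ℝ h p) + ((Prod.fst p) • fderiv ℝ m p + m p • (ContinuousLinearMap.fst ℝ ℝ ℝ))) p :=
    (((hasFDerivAt_snd.neg.mul hg.hasFDerivAt).add hh.hasFDerivAt).add
      (hasFDerivAt_fst.mul hm.hasFDerivAt))
  simp only [pdy, H.fderiv]
  simp [smul_eq_mul]; ring

lemma pdx_form3' {p : ℝ × ℝ} (hg : DifferentiableAt ℝ g p) (hh : DifferentiableAt ℝ h p)
    (hm : DifferentiableAt ℝ m p) :
    pdx (fun q => -g q + -q.2 * h q + q.1 * m q) p
      = -pdx g p + -p.2 * pdx h p + m p + p.1 * pdx m p := by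
  have H : HasFDerivAt (fun q : ℝ × ℝ => -g q + -q.2 * h q + q.1 * m q)
      (((-fderiv ℝ g p) + (-(Prod.snd p) • fderiv ℝ h p + h p • (-(ContinuousLinearMap.snd ℝ ℝ ℝ)))) +
       ((Prod.fst p) • fderiv ℝ m p + m p • (ContinuousLinearMap.fst ℝ ℝ ℝ))) p :=
    ((hg.hasFDerivAt.neg.add (hasFDerivAt_snd.neg.mul hh.hasFDerivAt)).add
      (hasFDerivAt_fst.mul hm.hasFDerivAt))
  simp only [pdx, H.fderiv]
  simp [smul_eq_mul]; ring

lemma pdy_form3' {p : ℝ × ℝ} (hg : DifferentiableAt ℝ g p) (hh : DifferentiableAt ℝ h p)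
    (hm : DifferentiableAt ℝ m p) :
    pdy (fun q => -g q + -q.2 * h q + q.1 * m q) p
      = -pdy g p + (-h p + -p.2 * pdy h p) + p.1 * pdy m p := by
  have H : HasFDerivAt (fun q : ℝ × ℝ => -g q + -q.2 * h q + q.1 * m q)
      (((-fderiv ℝ g p) + (-(Prod.snd p) • fderiv ℝ h p + h p • (-(ContinuousLinearMap.snd ℝ ℝ ℝ)))) +
       ((Prod.fst p) • fderiv ℝ m p + m p • (ContinuousLinearMap.fst ℝ ℝ ℝ))) p :=
    ((hg.hasFDerivAt.neg.add (hasFDerivAt_snd.neg.mul hh.hasFDerivAt)).add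
      (hasFDerivAt_fst.mul hm.hasFDerivAt))
  simp only [pdy, H.fderiv]
  simp [smul_eq_mul]; ring

lemma vanish_on_closure {F : ℝ × ℝ → ℝ} {Om : Set (ℝ × ℝ)}
    (h0 : ∀ p ∈ Om, F p = 0) {p} (hp : p ∈ closure Om) (hF : ContinuousAt F p) : F p = 0 := by
  have hne : (nhdsWithin p Om).NeBot := mem_closure_iff_nhdsWithin_neBot.1 hp
  have h1 : Filter.Tendsto F (nhdsWithin p Om) (nhds (F p)) := hF.continuousWithinAt
  have h2 : Filter.Tendsto F (nhdsWithin p Om) (nhds 0) := by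
    apply Filter.Tendsto.congr' _ tendsto_const_nhds
    filter_upwards [self_mem_nhdsWithin] with q hq
    exact (h0 q hq).symm
  exact tendsto_nhds_unique h1 h2

lemma pdx_congr_of_open (hU : IsOpen U) (hfg : ∀ q ∈ U, f q = g q) {p} (hp : p ∈ U) :
    pdx f p = pdx g p := by
  have : f =ᶠ[nhds p] g := Filter.eventuallyEq_of_mem (hU.mem_nhds hp) hfg
  simp [pdx, this.fderiv_eq]

lemma pdy_congr_of_open (hU : IsOpen U) (hfg : ∀ q ∈ U, f q = g q) {p} (hp : p ∈ U) :
    pdy f p = pdy g p := by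
  have : f =ᶠ[nhds p] g := Filter.eventuallyEq_of_mem (hU.mem_nhds hp) hfg
  simp [pdy, this.fderiv_eq]

lemma deriv_eq_of_funeq {f g : ℝ → ℝ} {a b s : ℝ}
    (hfg : ∀ t, f t = g t) (hf : HasDerivAt f a s) (hg : HasDerivAt g b s) : a = b := by
  have : f = g := funext hfg
  subst this
  exact hf.unique hg

end Helpers

/-- Boundary trace of `R²ω`:
`R²ω = -(½ (r²)')²` and
`∂(R²ω)/∂n = ½ (r²)'' · (-y x' + x y') - κ·(½ (r²)')²`. -/
theorem boundary_trace_rotation_squared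
    (Om : Set (ℝ × ℝ)) (hopen : IsOpen Om) (hconn : IsConnected Om)
    (hbdd : Bornology.IsBounded Om)
    (L : ℝ) (hL : 0 < L)
    (γ : ℝ → ℝ × ℝ) (θ : ℝ → ℝ)
    (hγsmooth : ContDiff ℝ (⊤ : ℕ∞) γ) (hθsmooth : ContDiff ℝ (⊤ : ℕ∞) θ)
    (hγper : ∀ s, γ (s + L) = γ s)
    (hθper : ∀ s, θ (s + L) = θ s + 2 * π)
    (hrange : Set.range γ = frontier Om)
    (hinj : Set.InjOn γ (Set.Ico 0 L))
    (hγderiv : ∀ s, deriv γ s = (Real.cos (θ s), Real.sin (θ s)))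
    (ω : ℝ × ℝ → ℝ)
    (hωsmooth : SmoothNearClosure Om ω)
    (hωpde : ∀ p ∈ Om, - lap ω p = ω p)
    (hωNeumann : ∀ s, nderiv (θ s) ω (γ s) = 0)
    (hωbdry : ∀ p ∈ frontier Om, ω p = 1)
    (s : ℝ) :
    Rop (Rop ω) (γ s)
      = -((1 / 2) * deriv (fun t => (γ t).1 ^ 2 + (γ t).2 ^ 2) s) ^ 2
    ∧ nderiv (θ s) (Rop (Rop ω)) (γ s)
      = (1 / 2) * deriv (deriv (fun t => (γ t).1 ^ 2 + (γ t).2 ^ 2)) s *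
          (-(γ s).2 * (deriv γ s).1 + (γ s).1 * (deriv γ s).2)
        - (-deriv θ s) * ((1 / 2) * deriv (fun t => (γ t).1 ^ 2 + (γ t).2 ^ 2) s) ^ 2 := by
  obtain ⟨U, hUo, hclo, hωU⟩ := hωsmooth
  have hOmU : Om ⊆ U := subset_closure.trans hclo
  have hfr : ∀ t, γ t ∈ frontier Om := fun t => hrange ▸ Set.mem_range_self t
  have hγcl : ∀ t, γ t ∈ closure Om := fun t => frontier_subset_closure (hfr t)
  have hγU : ∀ t, γ t ∈ U := fun t => hclo (hγcl t)
  have diffU : ∀ {g : ℝ × ℝ → ℝ}, ContDiffOn ℝ (⊤ : ℕ∞) g U → ∀ {q : ℝ × ℝ}, q ∈ U →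
      DifferentiableAt ℝ g q := fun {g} hg {q} hq => diffAt_of_cdOn hUo hg hq
  have contU : ∀ {g : ℝ × ℝ → ℝ}, ContDiffOn ℝ (⊤ : ℕ∞) g U → ∀ {q : ℝ × ℝ}, q ∈ U →
      ContinuousAt g q := fun {g} hg {q} hq => ((hg _ hq).contDiffAt (hUo.mem_nhds hq)).continuousAt
  have h1x := contDiffOn_pdx hUo hωU
  have h1y := contDiffOn_pdy hUo hωU
  have h2xx := contDiffOn_pdx hUo h1x
  have h2yx := contDiffOn_pdy hUo h1x
  have h2xy := contDiffOn_pdx hUo h1y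
  have h2yy := contDiffOn_pdy hUo h1y
  have hγd : ∀ t, HasDerivAt γ (Real.cos (θ t), Real.sin (θ t)) t := fun t => by
    have h := (hγsmooth.differentiable (by simp) t).hasDerivAt
    rwa [hγderiv t] at h
  have hθd : ∀ t, HasDerivAt θ (deriv θ t) t := fun t =>
    (hθsmooth.differentiable (by simp) t).hasDerivAt
  have hpyth : ∀ t : ℝ, Real.sin (θ t) ^ 2 + Real.cos (θ t) ^ 2 = 1 := fun t =>
    Real.sin_sq_add_cos_sq (θ t)
  -- Step 1 : the gradient of ω vanishes on the boundary
  have hω1 : ∀ t, ω (γ t) = 1 := fun t => hωbdry _ (hfr t)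
  have htan : ∀ t, Real.cos (θ t) * pdx ω (γ t) + Real.sin (θ t) * pdy ω (γ t) = 0 := by
    intro t
    have HL := hasDerivAt_comp_curve (f := ω) (hγd t) (diffU hωU (hγU t))
    have HR : HasDerivAt (fun u => ω (γ u)) 0 t := by
      have he : (fun u => ω (γ u)) = fun _ => (1:ℝ) := funext hω1
      rw [he]; exact hasDerivAt_const t 1
    exact HL.unique HR
  have hnu : ∀ t, Real.sin (θ t) * pdx ω (γ t) - Real.cos (θ t) * pdy ω (γ t) = 0 := hωNeumann
  have hgx : ∀ t, pdx ω (γ t) = 0 := by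
    intro t
    have h1 := htan t; have h2 := hnu t; have h3 := hpyth t
    linear_combination Real.cos (θ t) * h1 + Real.sin (θ t) * h2 - pdx ω (γ t) * h3
  have hgy : ∀ t, pdy ω (γ t) = 0 := by
    intro t
    have h1 := htan t; have h2 := hnu t; have h3 := hpyth t
    linear_combination Real.sin (θ t) * h1 - Real.cos (θ t) * h2 - pdy ω (γ t) * h3
  -- Step 2 : Laplacian on the boundary
  have hlapb : ∀ t, pdx (pdx ω) (γ t) + pdy (pdy ω) (γ t) = -1 := by
    intro t
    have h0 : ∀ p ∈ Om, pdx (pdx ω) p + pdy (pdy ω) p + ω p = 0 := by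
      intro p hp
      have h := hωpde p hp
      simp only [lap] at h
      linarith
    have hv : pdx (pdx ω) (γ t) + pdy (pdy ω) (γ t) + ω (γ t) = 0 :=
      vanish_on_closure h0 (hγcl t)
        (((contU h2xx (hγU t)).add (contU h2yy (hγU t))).add (contU hωU (hγU t)))
    have h1 := hω1 t
    linarith
  -- Step 3 : x- and y-derivatives of the PDE, restricted to boundary
  have hlapeq : ∀ q ∈ Om, lap ω q = -ω q := fun q hq => by
    have := hωpde q hq; linarith
  have hG1 : pdx (pdx (pdx ω)) (γ s) + pdx (pdy (pdy ω)) (γ s) = 0 := by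
    have h0 : ∀ p ∈ Om, pdx (pdx (pdx ω)) p + pdx (pdy (pdy ω)) p + pdx ω p = 0 := by
      intro p hp
      have e1 : pdx (lap ω) p = pdx (pdx (pdx ω)) p + pdx (pdy (pdy ω)) p :=
        pdx_add (diffU h2xx (hOmU hp)) (diffU h2yy (hOmU hp))
      have e2 : pdx (lap ω) p = -pdx ω p := by
        rw [pdx_congr_of_open (g := fun q => -ω q) hopen hlapeq hp]
        exact pdx_neg
      linarith
    have hv : pdx (pdx (pdx ω)) (γ s) + pdx (pdy (pdy ω)) (γ s) + pdx ω (γ s) = 0 :=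
      vanish_on_closure h0 (hγcl s)
        (((contU (contDiffOn_pdx hUo h2xx) (hγU s)).add
          (contU (contDiffOn_pdx hUo h2yy) (hγU s))).add (contU h1x (hγU s)))
    have h1 := hgx s
    linarith
  have hG2 : pdy (pdx (pdx ω)) (γ s) + pdy (pdy (pdy ω)) (γ s) = 0 := by
    have h0 : ∀ p ∈ Om, pdy (pdx (pdx ω)) p + pdy (pdy (pdy ω)) p + pdy ω p = 0 := by
      intro p hp
      have e1 : pdy (lap ω) p = pdy (pdx (pdx ω)) p + pdy (pdy (pdy ω)) p :=
        pdy_add (diffU h2xx (hOmU hp)) (diffU h2yy (hOmU hp))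
      have e2 : pdy (lap ω) p = -pdy ω p := by
        rw [pdy_congr_of_open (g := fun q => -ω q) hopen hlapeq hp]
        exact pdy_neg
      linarith
    have hv : pdy (pdx (pdx ω)) (γ s) + pdy (pdy (pdy ω)) (γ s) + pdy ω (γ s) = 0 :=
      vanish_on_closure h0 (hγcl s)
        (((contU (contDiffOn_pdy hUo h2xx) (hγU s)).add
          (contU (contDiffOn_pdy hUo h2yy) (hγU s))).add (contU h1y (hγU s)))
    have h1 := hgy s
    linarith
  -- Step 4 : the Hessian of ω on the boundary
  have htanx : ∀ t, Real.cos (θ t) * pdx (pdx ω) (γ t)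
      + Real.sin (θ t) * pdy (pdx ω) (γ t) = 0 := by
    intro t
    have HL := hasDerivAt_comp_curve (f := pdx ω) (hγd t) (diffU h1x (hγU t))
    have HR : HasDerivAt (fun u => pdx ω (γ u)) 0 t := by
      have he : (fun u => pdx ω (γ u)) = fun _ => (0:ℝ) := funext hgx
      rw [he]; exact hasDerivAt_const t 0
    exact HL.unique HR
  have htany : ∀ t, Real.cos (θ t) * pdx (pdy ω) (γ t)
      + Real.sin (θ t) * pdy (pdy ω) (γ t) = 0 := by
    intro t
    have HL := hasDerivAt_comp_curve (f := pdy ω) (hγd t) (diffU h1y (hγU t))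
    have HR : HasDerivAt (fun u => pdy ω (γ u)) 0 t := by
      have he : (fun u => pdy ω (γ u)) = fun _ => (0:ℝ) := funext hgy
      rw [he]; exact hasDerivAt_const t 0
    exact HL.unique HR
  have hsymU : ∀ q ∈ U, pdx (pdy ω) q = pdy (pdx ω) q := fun q hq => pdx_pdy_symm hUo hωU hq
  have hxx : ∀ t, pdx (pdx ω) (γ t) = -Real.sin (θ t) ^ 2 := by
    intro t
    have h1 := htanx t; have h2 := htany t; have h3 := hpyth t
    have h4 := hlapb t; have h5 := hsymU _ (hγU t)
    linear_combination Real.cos (θ t) * h1 - Real.sin (θ t) * h2 + Real.sin (θ t) ^ 2 * h4 +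
      Real.sin (θ t) * Real.cos (θ t) * h5 - pdx (pdx ω) (γ t) * h3
  have hyx : ∀ t, pdy (pdx ω) (γ t) = Real.sin (θ t) * Real.cos (θ t) := by
    intro t
    have h1 := htanx t; have h2 := htany t; have h3 := hpyth t
    have h4 := hlapb t; have h5 := hsymU _ (hγU t)
    linear_combination Real.sin (θ t) * h1 + Real.cos (θ t) * h2 -
      Real.sin (θ t) * Real.cos (θ t) * h4 - Real.cos (θ t) ^ 2 * h5 -
      pdy (pdx ω) (γ t) * h3
  have hxy : ∀ t, pdx (pdy ω) (γ t) = Real.sin (θ t) * Real.cos (θ t) := by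
    intro t
    rw [hsymU _ (hγU t)]; exact hyx t
  have hyy : ∀ t, pdy (pdy ω) (γ t) = -Real.cos (θ t) ^ 2 := by
    intro t
    have h1 := htanx t; have h2 := htany t; have h3 := hpyth t
    have h4 := hlapb t; have h5 := hsymU _ (hγU t)
    linear_combination -Real.cos (θ t) * h1 + Real.sin (θ t) * h2 + Real.cos (θ t) ^ 2 * h4 -
      Real.sin (θ t) * Real.cos (θ t) * h5 - pdy (pdy ω) (γ t) * h3
  -- Step 5 : third derivatives on the boundary
  have hsin : HasDerivAt (fun t => Real.sin (θ t)) (Real.cos (θ s) * deriv θ s) s :=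
    (Real.hasDerivAt_sin (θ s)).comp s (hθd s)
  have hcos : HasDerivAt (fun t => Real.cos (θ t)) (-Real.sin (θ s) * deriv θ s) s :=
    (Real.hasDerivAt_cos (θ s)).comp s (hθd s)
  have hE1 : Real.cos (θ s) * pdx (pdx (pdx ω)) (γ s)
      + Real.sin (θ s) * pdy (pdx (pdx ω)) (γ s)
      = -(2 * Real.sin (θ s) * (Real.cos (θ s) * deriv θ s)) := by
    have HL := hasDerivAt_comp_curve (f := pdx (pdx ω)) (hγd s) (diffU h2xx (hγU s))
    have HR : HasDerivAt (fun t => -Real.sin (θ t) ^ 2)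
        (-(2 * Real.sin (θ s) * (Real.cos (θ s) * deriv θ s))) s := by
      have h := (hsin.pow 2).neg
      refine h.congr_deriv ?_
      push_cast
      ring
    exact deriv_eq_of_funeq hxx HL HR
  have hE2 : Real.cos (θ s) * pdx (pdx (pdy ω)) (γ s)
      + Real.sin (θ s) * pdy (pdx (pdy ω)) (γ s)
      = Real.cos (θ s) * deriv θ s * Real.cos (θ s)
        + Real.sin (θ s) * (-Real.sin (θ s) * deriv θ s) := by
    have HL := hasDerivAt_comp_curve (f := pdx (pdy ω)) (hγd s) (diffU h2xy (hγU s))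
    have HR := hsin.mul hcos
    exact deriv_eq_of_funeq hxy HL HR
  have hc2a : pdx (pdx (pdy ω)) (γ s) = pdx (pdy (pdx ω)) (γ s) :=
    pdx_congr_of_open hUo hsymU (hγU s)
  have hc2b : pdx (pdy (pdx ω)) (γ s) = pdy (pdx (pdx ω)) (γ s) :=
    pdx_pdy_symm hUo h1x (hγU s)
  have hc3 : pdx (pdy (pdy ω)) (γ s) = pdy (pdx (pdy ω)) (γ s) :=
    pdx_pdy_symm hUo h1y (hγU s)
  have hc4 : pdy (pdx (pdy ω)) (γ s) = pdy (pdy (pdx ω)) (γ s) :=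
    pdy_congr_of_open hUo hsymU (hγU s)
  have hA : pdx (pdx (pdx ω)) (γ s)
      = deriv θ s * (Real.sin (θ s) ^ 3 - 3 * Real.sin (θ s) * Real.cos (θ s) ^ 2) := by
    have h3 := hpyth s
    have e12 : pdx (pdx (pdy ω)) (γ s) = pdy (pdx (pdx ω)) (γ s) := hc2a.trans hc2b
    linear_combination Real.cos (θ s) * hE1 - Real.sin (θ s) * hE2 +
      Real.sin (θ s) ^ 2 * hG1 + Real.sin (θ s) * Real.cos (θ s) * e12 -
      Real.sin (θ s) ^ 2 * hc3 - pdx (pdx (pdx ω)) (γ s) * h3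
  have hB : pdy (pdx (pdx ω)) (γ s)
      = deriv θ s * (Real.cos (θ s) ^ 3 - 3 * Real.sin (θ s) ^ 2 * Real.cos (θ s)) := by
    have h3 := hpyth s
    have e12 : pdx (pdx (pdy ω)) (γ s) = pdy (pdx (pdx ω)) (γ s) := hc2a.trans hc2b
    linear_combination Real.sin (θ s) * hE1 + Real.cos (θ s) * hE2 -
      Real.sin (θ s) * Real.cos (θ s) * hG1 - Real.cos (θ s) ^ 2 * e12 +
      Real.sin (θ s) * Real.cos (θ s) * hc3 - pdy (pdx (pdx ω)) (γ s) * h3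
  have hDc : pdx (pdy (pdy ω)) (γ s)
      = -(deriv θ s * (Real.sin (θ s) ^ 3 - 3 * Real.sin (θ s) * Real.cos (θ s) ^ 2)) := by
    linear_combination hG1 - hA
  have hEE : pdy (pdy (pdy ω)) (γ s)
      = -(deriv θ s * (Real.cos (θ s) ^ 3 - 3 * Real.sin (θ s) ^ 2 * Real.cos (θ s))) := by
    linear_combination hG2 - hB
  -- Step 6 : smoothness of Rω, first/second derivatives of Rω and R²ω
  have hRωcd : ContDiffOn ℝ (⊤ : ℕ∞) (Rop ω) U := by
    have he : Rop ω = fun q : ℝ × ℝ => -q.2 * pdx ω q + q.1 * pdy ω q := rfl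
    rw [he]
    exact (contDiff_snd.neg.contDiffOn.mul h1x).add (contDiff_fst.contDiffOn.mul h1y)
  have hpxRcd := contDiffOn_pdx hUo hRωcd
  have hpyRcd := contDiffOn_pdy hUo hRωcd
  have hP1U : ∀ q ∈ U, pdx (Rop ω) q
      = -q.2 * pdx (pdx ω) q + pdy ω q + q.1 * pdx (pdy ω) q :=
    fun q hq => pdx_RopForm (diffU h1x hq) (diffU h1y hq)
  have hP2U : ∀ q ∈ U, pdy (Rop ω) q
      = -pdx ω q + -q.2 * pdy (pdx ω) q + q.1 * pdy (pdy ω) q :=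
    fun q hq => pdy_RopForm (diffU h1x hq) (diffU h1y hq)
  have v4 : pdx (Rop ω) (γ s)
      = (γ s).2 * Real.sin (θ s) ^ 2 + (γ s).1 * (Real.sin (θ s) * Real.cos (θ s)) := by
    rw [hP1U _ (hγU s), hxx s, hgy s, hxy s]; ring
  have v2 : pdy (Rop ω) (γ s)
      = -((γ s).2 * (Real.sin (θ s) * Real.cos (θ s))) - (γ s).1 * Real.cos (θ s) ^ 2 := by
    rw [hP2U _ (hγU s), hgx s, hyx s, hyy s]; ring
  have v1 : pdx (pdx (Rop ω)) (γ s)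
      = -((γ s).2 * (deriv θ s * (Real.sin (θ s) ^ 3 - 3 * Real.sin (θ s) * Real.cos (θ s) ^ 2)))
        + 2 * (Real.sin (θ s) * Real.cos (θ s))
        + (γ s).1 * (deriv θ s * (Real.cos (θ s) ^ 3 - 3 * Real.sin (θ s) ^ 2 * Real.cos (θ s))) := by
    rw [pdx_congr_of_open hUo hP1U (hγU s),
      pdx_form3 (diffU h2xx (hγU s)) (diffU h1y (hγU s)) (diffU h2xy (hγU s)),
      hA, hxy s, hc2a, hc2b, hB]
    ring
  have v5 : pdy (pdx (Rop ω)) (γ s)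
      = Real.sin (θ s) ^ 2 - Real.cos (θ s) ^ 2
        - (γ s).2 * (deriv θ s * (Real.cos (θ s) ^ 3 - 3 * Real.sin (θ s) ^ 2 * Real.cos (θ s)))
        - (γ s).1 * (deriv θ s * (Real.sin (θ s) ^ 3 - 3 * Real.sin (θ s) * Real.cos (θ s) ^ 2)) := by
    rw [pdy_congr_of_open hUo hP1U (hγU s),
      pdy_form3 (diffU h2xx (hγU s)) (diffU h1y (hγU s)) (diffU h2xy (hγU s)),
      hxx s, hB, hyy s, ← hc3, hDc]
    ring
  have v3 : pdx (pdy (Rop ω)) (γ s)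
      = Real.sin (θ s) ^ 2 - Real.cos (θ s) ^ 2
        - (γ s).2 * (deriv θ s * (Real.cos (θ s) ^ 3 - 3 * Real.sin (θ s) ^ 2 * Real.cos (θ s)))
        - (γ s).1 * (deriv θ s * (Real.sin (θ s) ^ 3 - 3 * Real.sin (θ s) * Real.cos (θ s) ^ 2)) := by
    rw [pdx_congr_of_open hUo hP2U (hγU s),
      pdx_form3' (diffU h1x (hγU s)) (diffU h2yx (hγU s)) (diffU h2yy (hγU s)),
      hxx s, hc2b, hB, hyy s, hDc]
    ring
  have v6 : pdy (pdy (Rop ω)) (γ s)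
      = -(2 * (Real.sin (θ s) * Real.cos (θ s)))
        + (γ s).2 * (deriv θ s * (Real.sin (θ s) ^ 3 - 3 * Real.sin (θ s) * Real.cos (θ s) ^ 2))
        - (γ s).1 * (deriv θ s * (Real.cos (θ s) ^ 3 - 3 * Real.sin (θ s) ^ 2 * Real.cos (θ s))) := by
    rw [pdy_congr_of_open hUo hP2U (hγU s),
      pdy_form3' (diffU h1x (hγU s)) (diffU h2yx (hγU s)) (diffU h2yy (hγU s)),
      hyx s, ← hc4, ← hc3, hDc, hEE]
    ring
  have epx : pdx (Rop (Rop ω)) (γ s)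
      = -(γ s).2 * pdx (pdx (Rop ω)) (γ s) + pdy (Rop ω) (γ s)
        + (γ s).1 * pdx (pdy (Rop ω)) (γ s) :=
    pdx_RopForm (diffU hpxRcd (hγU s)) (diffU hpyRcd (hγU s))
  have epy : pdy (Rop (Rop ω)) (γ s)
      = -pdx (Rop ω) (γ s) + -(γ s).2 * pdy (pdx (Rop ω)) (γ s)
        + (γ s).1 * pdy (pdy (Rop ω)) (γ s) :=
    pdy_RopForm (diffU hpxRcd (hγU s)) (diffU hpyRcd (hγU s))
  -- Step 7 : derivatives of r²
  have hfst : ∀ t, HasDerivAt (fun u => (γ u).1) (Real.cos (θ t)) t := by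
    intro t
    have h := (ContinuousLinearMap.fst ℝ ℝ ℝ).hasFDerivAt.comp_hasDerivAt t (hγd t)
    simp at h
    exact h
  have hsnd : ∀ t, HasDerivAt (fun u => (γ u).2) (Real.sin (θ t)) t := by
    intro t
    have h := (ContinuousLinearMap.snd ℝ ℝ ℝ).hasFDerivAt.comp_hasDerivAt t (hγd t)
    simp at h
    exact h
  have hr2At : ∀ t, HasDerivAt (fun u => (γ u).1 ^ 2 + (γ u).2 ^ 2)
      (2 * (γ t).1 * Real.cos (θ t) + 2 * (γ t).2 * Real.sin (θ t)) t := by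
    intro t
    have h := ((hfst t).pow 2).add ((hsnd t).pow 2)
    refine h.congr_deriv ?_
    push_cast
    ring
  have Hd1 : deriv (fun t => (γ t).1 ^ 2 + (γ t).2 ^ 2) s
      = 2 * (γ s).1 * Real.cos (θ s) + 2 * (γ s).2 * Real.sin (θ s) := (hr2At s).deriv
  have Hderiv_eq : deriv (fun t => (γ t).1 ^ 2 + (γ t).2 ^ 2)
      = fun t => 2 * (γ t).1 * Real.cos (θ t) + 2 * (γ t).2 * Real.sin (θ t) :=
    funext fun t => (hr2At t).deriv
  have Hd2 : deriv (deriv (fun t => (γ t).1 ^ 2 + (γ t).2 ^ 2)) s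
      = (2 * Real.cos (θ s) * Real.cos (θ s)
          + 2 * (γ s).1 * (-Real.sin (θ s) * deriv θ s))
        + (2 * Real.sin (θ s) * Real.sin (θ s)
          + 2 * (γ s).2 * (Real.cos (θ s) * deriv θ s)) := by
    rw [Hderiv_eq]
    have H := (((hfst s).const_mul 2).mul hcos).add (((hsnd s).const_mul 2).mul hsin)
    exact H.deriv.trans (by ring)
  -- Final assembly
  constructor
  · have e1 : Rop (Rop ω) (γ s)
        = -(γ s).2 * pdx (Rop ω) (γ s) + (γ s).1 * pdy (Rop ω) (γ s) := rfl
    rw [e1, v4, v2, Hd1]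
    ring
  · show Real.sin (θ s) * pdx (Rop (Rop ω)) (γ s)
        - Real.cos (θ s) * pdy (Rop (Rop ω)) (γ s) = _
    rw [epx, epy, v1, v2, v3, v4, v5, v6, Hd1, Hd2, hγderiv s]
    have h3 := hpyth s
    linear_combination (deriv θ s * (-(γ s).2 ^ 2 * Real.cos (θ s) ^ 2
      + (γ s).2 ^ 2 * Real.sin (θ s) ^ 2
      + 4 * (γ s).1 * (γ s).2 * Real.sin (θ s) * Real.cos (θ s)
      + (γ s).1 ^ 2 * Real.cos (θ s) ^ 2 - (γ s).1 ^ 2 * Real.sin (θ s) ^ 2)) * h3
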